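/- arXiv:0909.2080 — 6 statements merged into one kernel-verified Lean document; each statement's English description precedes it below -/
import Mathlib

section
/- Let G be a finite abelian group, k ≥ 1 an integer, and a, b ∈ G such that S = a^k b is a zero-sum free sequence over G. If S is not a-smooth, then f(S) = 2k + 1. -/
open Multiset

/-- `S` is zero-sum free: no nonempty subsequence (sub-multiset) of `S` sums to `0`. -/
def ZeroSumFree {G : Type*} [AddCommGroup G] (S : Multiset G) : Prop :=
  ∀ T : Multiset G, T ≤ S → T ≠ 0 → T.sum ≠ 0

/-- `Σ(S)`: the set of elements expressible as the sum of a nonempty subsequence of `S`. -/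
def SubSums {G : Type*} [AddCommGroup G] (S : Multiset G) : Set G :=
  {x | ∃ T : Multiset G, T ≤ S ∧ T ≠ 0 ∧ T.sum = x}

/-- `f(S) = |Σ(S)|`. -/
noncomputable def fseq {G : Type*} [AddCommGroup G] (S : Multiset G) : ℕ :=
  (SubSums S).ncard

/-- `S` is `g`-smooth: `S = (n₁g)(n₂g)⋯(n_lg)` with `1 = n₁ ≤ ⋯ ≤ n_l`,
`n = n₁ + ⋯ + n_l < ord(g)` and `Σ(S) = {g, 2g, …, ng}`. -/
def IsSmoothAt {G : Type*} [AddCommGroup G] (g : G) (S : Multiset G) : Prop :=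
  ∃ ns : List ℕ,
    ns.Pairwise (· ≤ ·) ∧ ns.head? = some 1 ∧
    S = ↑(ns.map (fun n => n • g)) ∧
    ns.sum < addOrderOf g ∧
    SubSums S = {x | ∃ m : ℕ, 1 ≤ m ∧ m ≤ ns.sum ∧ x = m • g}

/-- `S` is smooth if it is `g`-smooth for some `g ∈ G`. -/
def IsSmooth {G : Type*} [AddCommGroup G] (S : Multiset G) : Prop :=
  ∃ g : G, IsSmoothAt g S

/-!
`Σ(aᵏb)` consists of the multiples `a, …, ka` and the `k + 1` elements `b, b + a, …, b + ka`.
Zero-sum freeness makes `0, a, …, ka` pairwise distinct, so `f(S) = 2k + 1` unless the two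
families meet. A coincidence `ia = b + ja` with `i ≤ j` yields the zero sum `b + (j - i)a`; with
`i > j` it yields `b = ca` for some `1 ≤ c ≤ k`, and then `S = aᵏ(ca)` is `a`-smooth with
`Σ(S) = {a, 2a, …, (k + c)a}`.
-/

section

variable {G : Type*} [AddCommGroup G]

theorem mem_subSums_cons {b x : G} {s : Multiset G} :
    x ∈ SubSums (b ::ₘ s) ↔ x ∈ SubSums s ∨ ∃ T ≤ s, b + T.sum = x := by
  constructor
  · rintro ⟨T, hT, hT0, rfl⟩
    rw [← mem_powerset, powerset_cons, mem_add, mem_map] at hT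
    rcases hT with hT | ⟨U, hU, rfl⟩
    · exact Or.inl ⟨T, mem_powerset.mp hT, hT0, rfl⟩
    · exact Or.inr ⟨U, mem_powerset.mp hU, (sum_cons b U).symm⟩
  · rintro (⟨T, hT, hT0, rfl⟩ | ⟨T, hT, rfl⟩)
    · exact ⟨T, hT.trans (le_cons_self s b), hT0, rfl⟩
    · exact ⟨b ::ₘ T, cons_le_cons b hT, cons_ne_zero, sum_cons b T⟩

theorem subSums_replicate (k : ℕ) (a : G) :
    SubSums (replicate k a) = (· • a) '' Set.Icc 1 k := by
  ext x
  simp only [SubSums, Set.mem_ofPred_eq, le_replicate_iff, ← card_pos]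
  constructor
  · rintro ⟨_, ⟨i, hik, rfl⟩, hi, rfl⟩
    exact ⟨i, ⟨card_replicate i a ▸ hi, hik⟩, (sum_replicate i a).symm⟩
  · rintro ⟨i, ⟨hi, hik⟩, rfl⟩
    exact ⟨_, ⟨i, hik, rfl⟩, (card_replicate i a).symm ▸ hi, sum_replicate i a⟩

theorem subSums_replicate_add_singleton (k : ℕ) (a b : G) :
    SubSums (replicate k a + {b}) =
      (· • a) '' Set.Icc 1 k ∪ (fun j => b + j • a) '' Set.Iic k := by
  ext x
  rw [add_comm, singleton_add, mem_subSums_cons, subSums_replicate]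
  simp [le_replicate_iff]

theorem ZeroSumFree.ne_zero_of_mem_subSums {S : Multiset G} (hS : ZeroSumFree S) {x : G}
    (hx : x ∈ SubSums S) : x ≠ 0 := by
  obtain ⟨T, hTS, hT, rfl⟩ := hx
  exact hS T hTS hT

theorem lt_addOrderOf_of_nsmul_ne_zero [Finite G] {a : G} {n : ℕ}
    (h : ∀ i, 1 ≤ i → i ≤ n → i • a ≠ 0) : n < addOrderOf a := by
  by_contra! hle
  exact h _ (addOrderOf_pos a) hle (addOrderOf_nsmul_eq_zero a)

theorem isSmoothAt_replicate_add_singleton_nsmul [Finite G] {k c : ℕ} {a : G} (hc : 1 ≤ c)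
    (hck : c ≤ k) (hS : ZeroSumFree (replicate k a + {c • a})) :
    IsSmoothAt a (replicate k a + {c • a}) := by
  have hsubSums : SubSums (replicate k a + {c • a}) =
      {x | ∃ m, 1 ≤ m ∧ m ≤ k + c ∧ x = m • a} := by
    rw [subSums_replicate_add_singleton]
    ext x
    simp only [Set.mem_union, Set.mem_image, Set.mem_Icc, Set.mem_Iic, Set.mem_ofPred_eq,
      ← add_nsmul]
    constructor
    · rintro (⟨i, ⟨hi, hik⟩, rfl⟩ | ⟨j, hj, rfl⟩)
      · exact ⟨i, hi, by omega, rfl⟩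
      · exact ⟨c + j, by omega, by omega, rfl⟩
    · rintro ⟨m, hm, hmk, rfl⟩
      rcases le_or_gt m k with h | h
      · exact Or.inl ⟨m, ⟨hm, h⟩, rfl⟩
      · exact Or.inr ⟨m - c, by omega, by rw [Nat.add_sub_cancel' (by omega)]⟩
  obtain ⟨k, rfl⟩ : ∃ k', k = k' + 1 := ⟨k - 1, by omega⟩
  have hsum : (List.replicate (k + 1) 1 ++ [c]).sum = k + 1 + c := by simp
  refine ⟨List.replicate (k + 1) 1 ++ [c], ?_, by simp [List.replicate_succ], ?_, ?_, ?_⟩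
  · simp [List.pairwise_append, List.pairwise_replicate, hc]
  · rw [List.map_append, List.map_replicate, one_nsmul, ← coe_add, coe_replicate]
    rfl
  · rw [hsum]
    exact lt_addOrderOf_of_nsmul_ne_zero fun m hm hmk =>
      hS.ne_zero_of_mem_subSums (hsubSums ▸ ⟨m, hm, hmk, rfl⟩)
  · rw [hsum, hsubSums]

theorem nsmul_ne_add_nsmul_of_not_isSmoothAt [Finite G] {k i j : ℕ} {a b : G}
    (hS : ZeroSumFree (replicate k a + {b})) (hns : ¬ IsSmoothAt a (replicate k a + {b}))
    (hi : 1 ≤ i) (hik : i ≤ k) (hjk : j ≤ k) : i • a ≠ b + j • a := by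
  intro h
  rcases le_or_gt i j with hij | hji
  · have hzero : b + (j - i) • a = 0 := by
      refine add_eq_right.mp (?_ : _ = i • a)
      rw [add_assoc, ← add_nsmul, Nat.sub_add_cancel hij, h]
    refine hS.ne_zero_of_mem_subSums ?_ hzero
    rw [subSums_replicate_add_singleton]
    exact Or.inr ⟨j - i, by simp; omega, rfl⟩
  · have hb : (i - j) • a = b := by
      refine add_right_cancel (?_ : _ = b + j • a)
      rw [← add_nsmul, Nat.sub_add_cancel hji.le, h]
    subst hb
    exact hns (isSmoothAt_replicate_add_singleton_nsmul (by omega) (by omega) hS)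

end

theorem stmt2_general {G : Type*} [AddCommGroup G] [Fintype G] (k : ℕ)
    (a b : G) (hS : ZeroSumFree (replicate k a + {b}))
    (hns : ¬ IsSmoothAt a (replicate k a + {b})) :
    fseq (replicate k a + {b}) = 2 * k + 1 := by
  have hk : k < addOrderOf a := lt_addOrderOf_of_nsmul_ne_zero fun i hi hik =>
    hS.ne_zero_of_mem_subSums <| by
      rw [subSums_replicate_add_singleton]; exact Or.inl ⟨i, ⟨hi, hik⟩, rfl⟩
  have hnsmul_inj : Set.InjOn (· • a) (Set.Iic k) :=
    nsmul_injOn_Iio_addOrderOf.mono (Set.Iic_subset_Iio.mpr hk)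
  have hshift_inj : Set.InjOn (fun j => b + j • a) (Set.Iic k) :=
    (add_right_injective b).comp_injOn hnsmul_inj
  have hdisj : Disjoint ((· • a) '' Set.Icc 1 k) ((fun j => b + j • a) '' Set.Iic k) := by
    rw [Set.disjoint_left]
    rintro _ ⟨i, ⟨hi, hik⟩, rfl⟩ ⟨j, hjk, h⟩
    exact nsmul_ne_add_nsmul_of_not_isSmoothAt hS hns hi hik hjk h.symm
  rw [fseq, subSums_replicate_add_singleton, Set.ncard_union_eq hdisj,
    (hnsmul_inj.mono Set.Icc_subset_Iic_self).ncard_image,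
    hshift_inj.ncard_image, Set.ncard_Icc_nat, Set.ncard_Iic_nat]
  omega

/-- Lemma 2.3: if `S = aᵏb` is zero-sum free and not `a`-smooth, then
`f(S) = 2k + 1`. -/
theorem stmt2 {G : Type*} [AddCommGroup G] [Fintype G] (k : ℕ) (hk : 1 ≤ k)
    (a b : G) (hS : ZeroSumFree (replicate k a + {b}))
    (hns : ¬ IsSmoothAt a (replicate k a + {b})) :
    fseq (replicate k a + {b}) = 2 * k + 1 :=
  stmt2_general k a b hS hns
end

section
/- Let k ≥ l ≥ 2 be integers and let a, b be two distinct elements of a finite abelian group G such that a^k b^l is zero-sum free and a^k b^l is not smooth. If 2a ≠ 2b, then f(a^k b^l) ≥ 2(k + l). -/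
/-!
Write `φ(i, j) = i • a + j • b`, so that `Σ(aᵏbˡ)` is the image under `φ` of the nonzero points
of the box `[0, k] × [0, l]`. Zero-sum freeness makes `φ` injective on comparable points, so every
collision `φ p = φ q` yields a relation `u • a = d • b` with `1 ≤ u ≤ k`, `1 ≤ d ≤ l`. The relations
have a least element `(u₀, d₀)` for the product order, and `φ` is injective on the L-shaped region
`{i < u₀} ∪ {j > l - d₀}` of the box, which has `u₀ (l + 1) + (k + 1 - u₀) d₀` points. If `u₀ = 1`
or `d₀ = 1` the sequence is smooth, and `u₀ = d₀ = 2` means `2a = 2b`; in all other cases, including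
the one without relations (`u₀ = k + 1`, `d₀ = l + 1`), the region has more than
`2(k + l)` points, so at least `2(k + l)` nonzero ones.
-/

open Multiset

theorem Nat.exists_add_mul_eq_of_le {k l u m : ℕ} (huk : u ≤ k) (hm : m ≤ k + l * u) :
    ∃ i ≤ k, ∃ j ≤ l, i + j * u = m := by
  by_cases hl : l ≤ m / u
  · have := (Nat.mul_le_mul_right u hl).trans (Nat.div_mul_le_self m u)
    exact ⟨m - l * u, by omega, l, le_rfl, by omega⟩
  · refine ⟨m % u, ?_, m / u, by omega, Nat.mod_add_div' m u⟩
    rcases u.eq_zero_or_pos with rfl | hu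
    · simpa using hm
    · exact (Nat.mod_lt m hu).le.trans huk

theorem Multiset.exists_eq_add_of_le_add {α : Type*} {s t u : Multiset α} (h : u ≤ s + t) :
    ∃ u₁ ≤ s, ∃ u₂ ≤ t, u = u₁ + u₂ := by
  classical
  exact ⟨u ∩ s, inter_le_right, u - s, Multiset.sub_le_iff_le_add.2 (by rwa [add_comm]),
    by rw [add_comm, sub_add_inter]⟩

section

variable {G : Type*} [AddCommGroup G]

theorem zeroSumFree_iff_zero_notMem_subSums {S : Multiset G} :
    ZeroSumFree S ↔ (0 : G) ∉ SubSums S := by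
  simp [ZeroSumFree, SubSums]

def pairSum (a b : G) : ℕ × ℕ →+ G :=
  (multiplesHom G a).coprod (multiplesHom G b)

@[simp]
theorem pairSum_apply (a b : G) (p : ℕ × ℕ) : pairSum a b p = p.1 • a + p.2 • b := rfl

variable {a b : G} {k l : ℕ}

theorem subSums_replicate_add_replicate :
    SubSums (replicate k a + replicate l b) = pairSum a b '' {p | p ≤ (k, l) ∧ p ≠ 0} := by
  ext x
  constructor
  · rintro ⟨T, hT, hT0, rfl⟩
    obtain ⟨T₁, h₁, T₂, h₂, rfl⟩ := exists_eq_add_of_le_add hT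
    obtain ⟨i, hi, rfl⟩ := le_replicate_iff.1 h₁
    obtain ⟨j, hj, rfl⟩ := le_replicate_iff.1 h₂
    refine ⟨(i, j), ⟨Prod.mk_le_mk.2 ⟨hi, hj⟩, ?_⟩, by simp⟩
    rintro ⟨⟩
    simp at hT0
  · rintro ⟨⟨i, j⟩, ⟨hij, hne⟩, rfl⟩
    obtain ⟨hi, hj⟩ := Prod.mk_le_mk.1 hij
    refine ⟨replicate i a + replicate j b, add_le_add (replicate_mono a hi) (replicate_mono b hj),
      ?_, by simp⟩
    rw [Ne, ← card_eq_zero, card_add, card_replicate, card_replicate]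
    simpa [Prod.ext_iff] using hne

theorem ZeroSumFree.pairSum_ne_zero (hS : ZeroSumFree (replicate k a + replicate l b))
    {p : ℕ × ℕ} (hp : p ≤ (k, l)) (hp0 : p ≠ 0) : pairSum a b p ≠ 0 := by
  rw [zeroSumFree_iff_zero_notMem_subSums, subSums_replicate_add_replicate] at hS
  exact fun h ↦ hS ⟨p, ⟨hp, hp0⟩, h⟩

theorem ZeroSumFree.eq_of_le_of_pairSum_eq (hS : ZeroSumFree (replicate k a + replicate l b))
    {p q : ℕ × ℕ} (hq : q ≤ (k, l)) (hpq : p ≤ q) (h : pairSum a b p = pairSum a b q) :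
    p = q := by
  by_contra hne
  refine hS.pairSum_ne_zero (tsub_le_self.trans hq)
    (fun h0 ↦ hne (hpq.antisymm (tsub_eq_zero_iff_le.1 h0))) ?_
  rwa [← add_tsub_cancel_of_le hpq, _root_.map_add, left_eq_add] at h

def IsRelation (a b : G) (k l : ℕ) (r : ℕ × ℕ) : Prop :=
  r ≤ (k, l) ∧ r ≠ 0 ∧ r.1 • a = r.2 • b

theorem ZeroSumFree.one_le_of_isRelation (hS : ZeroSumFree (replicate k a + replicate l b))
    {r : ℕ × ℕ} (hr : IsRelation a b k l r) : (1, 1) ≤ r := by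
  obtain ⟨u, d⟩ := r
  obtain ⟨hrkl, hr0, hrel⟩ := hr
  obtain ⟨hu, hd⟩ := Prod.mk_le_mk.1 hrkl
  refine Prod.mk_le_mk.2
    ⟨Nat.one_le_iff_ne_zero.2 fun hu0 ↦ ?_, Nat.one_le_iff_ne_zero.2 fun hd0 ↦ ?_⟩
  · refine hS.pairSum_ne_zero (p := (0, d)) (Prod.mk_le_mk.2 ⟨Nat.zero_le _, hd⟩) ?_ ?_
    · simpa [hu0] using hr0
    · simp [← hrel, hu0]
  · refine hS.pairSum_ne_zero (p := (u, 0)) (Prod.mk_le_mk.2 ⟨hu, Nat.zero_le _⟩) ?_ ?_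
    · simpa [hd0] using hr0
    · simp [hrel, hd0]

theorem ZeroSumFree.isRelation_of_pairSum_eq (hS : ZeroSumFree (replicate k a + replicate l b))
    {p q : ℕ × ℕ} (hp : p ≤ (k, l)) (hq : q ≤ (k, l)) (h1 : p.1 ≤ q.1)
    (h : pairSum a b p = pairSum a b q) (hne : p ≠ q) :
    IsRelation a b k l (q.1 - p.1, p.2 - q.2) := by
  have h2 : q.2 < p.2 := by
    by_contra! h2
    exact hne (hS.eq_of_le_of_pairSum_eq hq (Prod.mk_le_mk.2 ⟨h1, h2⟩) h)
  refine ⟨Prod.mk_le_mk.2 ⟨tsub_le_self.trans hq.1, tsub_le_self.trans hp.2⟩,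
    ne_of_apply_ne Prod.snd (Nat.sub_ne_zero_of_lt h2), ?_⟩
  obtain ⟨u, hu⟩ := Nat.exists_eq_add_of_le h1
  obtain ⟨d, hd⟩ := Nat.exists_eq_add_of_le h2.le
  simp only [pairSum_apply, hu, hd, add_nsmul] at h
  simp only [hu, hd, add_tsub_cancel_left]
  calc u • a = p.1 • a + (q.2 • b + d • b) - (p.1 • a + q.2 • b) := by rw [h]; abel
    _ = d • b := by abel

theorem ZeroSumFree.exists_minimal_relation (hS : ZeroSumFree (replicate k a + replicate l b))
    (h : ∃ r, IsRelation a b k l r) :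
    ∃ r, IsRelation a b k l r ∧ ∀ s, IsRelation a b k l s → r ≤ s := by
  classical
  have hex : ∃ u d, IsRelation a b k l (u, d) := let ⟨r, hr⟩ := h; ⟨r.1, r.2, hr⟩
  obtain ⟨d, hd⟩ := Nat.find_spec hex
  refine ⟨_, hd, fun s hs ↦ Prod.mk_le_mk.2 ⟨Nat.find_min' hex ⟨s.2, hs⟩, ?_⟩⟩
  by_contra! hlt
  have hle : (Nat.find hex, s.2) ≤ (s.1, d) := Prod.mk_le_mk.2 ⟨Nat.find_min' hex ⟨s.2, hs⟩, hlt.le⟩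
  -- both points are sent to `d • b + s.2 • b`
  have heq := hS.eq_of_le_of_pairSum_eq (Prod.mk_le_mk.2 ⟨hs.1.1, hd.1.2⟩) hle (by
    simp only [pairSum_apply, hd.2.2, hs.2.2]; abel)
  exact hlt.ne (congrArg Prod.snd heq)

end

def lShape (k l u d : ℕ) : Finset (ℕ × ℕ) :=
  Finset.range u ×ˢ Finset.range (l + 1) ∪ Finset.Ico u (k + 1) ×ˢ Finset.Ico (l + 1 - d) (l + 1)

theorem mem_lShape {k l u d : ℕ} (hu : u ≤ k + 1) {p : ℕ × ℕ} :
    p ∈ lShape k l u d ↔ p ≤ (k, l) ∧ (p.1 < u ∨ l < p.2 + d) := by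
  simp only [lShape, Finset.mem_union, Finset.mem_product, Finset.mem_range, Finset.mem_Ico,
    Prod.le_def]
  omega

theorem card_lShape {k l u d : ℕ} (hd : d ≤ l + 1) :
    (lShape k l u d).card = u * (l + 1) + (k + 1 - u) * d := by
  rw [lShape, Finset.card_union_of_disjoint, Finset.card_product, Finset.card_product,
    Finset.card_range, Finset.card_range, Nat.card_Ico, Nat.card_Ico, Nat.sub_sub_self hd]
  simp only [Finset.disjoint_left, Finset.mem_product, Finset.mem_range, Finset.mem_Ico]
  omega

theorem two_mul_add_lt_card_lShape {k l u d : ℕ} (hk : 2 ≤ k) (hl : 2 ≤ l) (hu : 2 ≤ u)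
    (huk : u ≤ k + 1) (hd : 2 ≤ d) (hdl : d ≤ l + 1) (h3 : 3 ≤ u ∨ 3 ≤ d) :
    2 * (k + l) < (lShape k l u d).card := by
  obtain ⟨m, hm⟩ := Nat.exists_eq_add_of_le huk
  rw [card_lShape hdl, hm, Nat.add_sub_cancel_left]
  rcases h3 with h3 | h3 <;> nlinarith

section

variable {G : Type*} [AddCommGroup G] {a b : G} {k l : ℕ}

theorem ZeroSumFree.card_lShape_le_fseq_add_one [Finite G]
    (hS : ZeroSumFree (replicate k a + replicate l b)) {u d : ℕ} (hu : u ≤ k + 1)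
    (hmin : ∀ r, IsRelation a b k l r → (u, d) ≤ r) :
    (lShape k l u d).card ≤ fseq (replicate k a + replicate l b) + 1 := by
  classical
  have hinj : ∀ p ∈ lShape k l u d, ∀ q ∈ lShape k l u d, p.1 ≤ q.1 →
      pairSum a b p = pairSum a b q → p = q := by
    intro p hp q hq h1 h
    rw [mem_lShape hu] at hp hq
    by_contra hne
    have := hmin _ (hS.isRelation_of_pairSum_eq hp.1 hq.1 h1 h hne)
    simp only [Prod.le_def] at this hp hq
    omega
  have himage : ((lShape k l u d).image (pairSum a b) : Set G) ⊆
      insert 0 (SubSums (replicate k a + replicate l b)) := by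
    rw [subSums_replicate_add_replicate, Finset.coe_image, Set.image_subset_iff]
    intro p hp
    by_cases hp0 : p = 0
    · simp [hp0]
    · exact Or.inr ⟨p, ⟨((mem_lShape hu).1 hp).1, hp0⟩, rfl⟩
  calc (lShape k l u d).card
      = ((lShape k l u d).image (pairSum a b)).card := by
        refine (Finset.card_image_of_injOn fun p hp q hq h ↦ ?_).symm
        rcases le_total p.1 q.1 with h1 | h1
        exacts [hinj p hp q hq h1 h, (hinj q hq p hp h1 h.symm).symm]
    _ ≤ (insert 0 (SubSums (replicate k a + replicate l b))).ncard := by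
        rw [← Set.ncard_coe_finset]
        exact Set.ncard_le_ncard himage (Set.toFinite _)
    _ ≤ fseq (replicate k a + replicate l b) + 1 := Set.ncard_insert_le _ _

theorem ZeroSumFree.isSmoothAt [Finite G] {g : G} {u : ℕ}
    (hS : ZeroSumFree (replicate k g + replicate l (u • g))) (hu : 1 ≤ u) (huk : u ≤ k) :
    IsSmoothAt g (replicate k g + replicate l (u • g)) := by
  have hsub : SubSums (replicate k g + replicate l (u • g)) =
      {x | ∃ m, 1 ≤ m ∧ m ≤ k + l * u ∧ x = m • g} := by
    rw [subSums_replicate_add_replicate]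
    ext x
    constructor
    · rintro ⟨⟨i, j⟩, ⟨hij, hne⟩, rfl⟩
      obtain ⟨hi, hj⟩ := Prod.mk_le_mk.1 hij
      have := Nat.le_mul_of_pos_right j hu
      have := Nat.mul_le_mul_right u hj
      refine ⟨i + j * u, ?_, by omega, by simp [add_nsmul, smul_smul]⟩
      simp only [Ne, Prod.mk_eq_zero, not_and_or] at hne
      omega
    · rintro ⟨m, hm1, hm, rfl⟩
      obtain ⟨i, hi, j, hj, rfl⟩ := Nat.exists_add_mul_eq_of_le huk hm
      refine ⟨(i, j), ⟨Prod.mk_le_mk.2 ⟨hi, hj⟩, ?_⟩, by simp [add_nsmul, smul_smul]⟩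
      rintro ⟨⟩
      simp at hm1
  have horder : k + l * u < addOrderOf g := by
    by_contra! h
    rw [zeroSumFree_iff_zero_notMem_subSums, hsub] at hS
    exact hS ⟨_, addOrderOf_pos g, h, (addOrderOf_nsmul_eq_zero g).symm⟩
  refine ⟨List.replicate k 1 ++ List.replicate l u, ?_, ?_, ?_, ?_, ?_⟩
  · refine List.pairwise_append.2 ⟨?_, ?_, fun x hx y hy ↦ ?_⟩
    · exact List.pairwise_replicate.2 (Or.inr le_rfl)
    · exact List.pairwise_replicate.2 (Or.inr le_rfl)
    · rwa [List.eq_of_mem_replicate hx, List.eq_of_mem_replicate hy]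
  · obtain ⟨k, rfl⟩ := Nat.exists_eq_add_of_le' (hu.trans huk)
    simp [List.replicate_succ]
  · simp [List.map_replicate, ← Multiset.coe_add, Multiset.coe_replicate]
  · simpa [List.sum_replicate] using horder
  · simpa [List.sum_replicate] using hsub

theorem ZeroSumFree.isSmooth_of_eq_nsmul [Finite G] {u : ℕ}
    (hS : ZeroSumFree (replicate k a + replicate l b)) (hu : 1 ≤ u) (huk : u ≤ k)
    (hb : b = u • a) : IsSmooth (replicate k a + replicate l b) := by
  subst hb
  exact ⟨a, hS.isSmoothAt hu huk⟩

end

theorem stmt3_general {G : Type*} [AddCommGroup G] [Fintype G] (k l : ℕ)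
    (hl : 2 ≤ l) (hkl : l ≤ k) (a b : G)
    (hS : ZeroSumFree (replicate k a + replicate l b))
    (hns : ¬ IsSmooth (replicate k a + replicate l b))
    (h2 : 2 • a ≠ 2 • b) :
    2 * (k + l) ≤ fseq (replicate k a + replicate l b) := by
  suffices ∃ u d, 2 ≤ u ∧ u ≤ k + 1 ∧ 2 ≤ d ∧ d ≤ l + 1 ∧ (3 ≤ u ∨ 3 ≤ d) ∧
      ∀ r, IsRelation a b k l r → (u, d) ≤ r by
    obtain ⟨u, d, hu, huk, hd, hdl, h3, hmin⟩ := this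
    have := two_mul_add_lt_card_lShape (hl.trans hkl) hl hu huk hd hdl h3
    have := hS.card_lShape_le_fseq_add_one huk hmin
    omega
  by_cases hrel : ∃ r, IsRelation a b k l r
  · obtain ⟨⟨u, d⟩, hr, hmin⟩ := hS.exists_minimal_relation hrel
    obtain ⟨hu, hd⟩ := Prod.mk_le_mk.1 (hS.one_le_of_isRelation hr)
    obtain ⟨hrkl, -, hud⟩ := hr
    obtain ⟨huk, hdl⟩ := Prod.mk_le_mk.1 hrkl
    have hu1 : u ≠ 1 := by
      rintro rfl
      rw [add_comm] at hS hns
      exact hns (hS.isSmooth_of_eq_nsmul hd hdl ((one_nsmul a).symm.trans hud))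
    have hd1 : d ≠ 1 := by
      rintro rfl
      exact hns (hS.isSmooth_of_eq_nsmul hu huk ((one_nsmul b).symm.trans hud.symm))
    have h22 : ¬(u = 2 ∧ d = 2) := by
      rintro ⟨rfl, rfl⟩
      exact h2 hud
    exact ⟨u, d, by omega, by omega, by omega, by omega, by omega, hmin⟩
  · exact ⟨k + 1, l + 1, by omega, le_rfl, by omega, le_rfl, by omega,
      fun r hr ↦ (hrel ⟨r, hr⟩).elim⟩

/-- Lemma 2.5(i): `k ≥ l ≥ 2`, `a ≠ b`, `aᵏbˡ` zero-sum free and not smooth,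
`2a ≠ 2b` imply `f(aᵏbˡ) ≥ 2(k + l)`. -/
theorem stmt3 {G : Type*} [AddCommGroup G] [Fintype G] (k l : ℕ)
    (hl : 2 ≤ l) (hkl : l ≤ k) (a b : G) (hab : a ≠ b)
    (hS : ZeroSumFree (replicate k a + replicate l b))
    (hns : ¬ IsSmooth (replicate k a + replicate l b))
    (h2 : 2 • a ≠ 2 • b) :
    2 * (k + l) ≤ fseq (replicate k a + replicate l b) :=
  stmt3_general k l hl hkl a b hS hns h2
end

section
/- Let k ≥ l ≥ 2 be integers and let a, b be two distinct elements of a finite abelian group G such that a^k b^l is zero-sum free and a^k b^l is not smooth. If 2a = 2b, then f(a^k b^l) = 2(k + l) − 1. -/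
open Multiset

/-!
Put `d = b - a`. Then `2 • d = 0` and `d ≠ 0`, so a subsum `i • a + j • b` equals
`(i + j) • a + (j % 2) • d`. Hence `Σ(aᵏbˡ)` consists of the elements `m • a + e • d` with
`e < 2` and `1 ≤ m ≤ k + (l - (l + e) % 2)`, where `l - (l + e) % 2` is the largest `j ≤ l` with
`j ≡ e (mod 2)`; the two bounds add up to `2 * (k + l) - 1`. These elements are pairwise distinct:
a coincidence would give `s • a + e • d = 0` with `0 < s < k + l`, but every such element is again
a nonempty subsum, so zero-sum freeness forbids it.
-/

namespace Nat

theorem exists_add_eq_and_mod_two_eq {k l s e : ℕ} (hk : 0 < k) (hl : 0 < l) (he : e < 2)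
    (hs : 0 < s) (hsk : s ≤ k + (l - (l + e) % 2)) :
    ∃ i ≤ k, ∃ j ≤ l, i + j = s ∧ j % 2 = e := by
  by_cases hsk' : s ≤ k
  · by_cases he0 : e = 0
    · exact ⟨s, hsk', 0, by omega⟩
    · exact ⟨s - 1, by omega, 1, by omega⟩
  · by_cases hpar : (s - k) % 2 = e
    · exact ⟨k, le_rfl, s - k, by omega⟩
    · exact ⟨k - 1, by omega, s - k + 1, by omega⟩

end Nat

theorem Multiset.eq_replicate_add_replicate_of_le {α : Type*} [DecidableEq α] {a b : α}
    (hab : a ≠ b) {k l : ℕ} {T : Multiset α} (hT : T ≤ replicate k a + replicate l b) :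
    T = replicate (count a T) a + replicate (count b T) b := by
  ext x
  have hx := count_le_of_le x hT
  rcases eq_or_ne x a with rfl | hxa
  · simp [count_replicate, hab.symm]
  rcases eq_or_ne x b with rfl | hxb
  · simp [count_replicate, hxa.symm]
  · simp_all [count_replicate, eq_comm]

section

variable {G : Type*} [AddCommGroup G]

theorem nsmul_add_nsmul_mem_subSums (a b : G) {k l i j : ℕ} (hi : i ≤ k) (hj : j ≤ l)
    (hij : 0 < i + j) : i • a + j • b ∈ SubSums (replicate k a + replicate l b) := by
  refine ⟨replicate i a + replicate j b, ?_, ?_, by simp [sum_replicate]⟩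
  · exact add_le_add ((replicate_le_replicate a).mpr hi) ((replicate_le_replicate b).mpr hj)
  · rw [← card_pos]
    simpa using hij

theorem subSums_replicate_add_replicate_s4 {a b : G} (hab : a ≠ b) (k l : ℕ) :
    SubSums (replicate k a + replicate l b) =
      {x | ∃ i ≤ k, ∃ j ≤ l, 0 < i + j ∧ i • a + j • b = x} := by
  classical
  ext x
  constructor
  · rintro ⟨T, hT, hT0, rfl⟩
    have hTab := eq_replicate_add_replicate_of_le hab hT
    refine ⟨count a T, ?_, count b T, ?_, ?_, ?_⟩
    · simpa [count_replicate, hab.symm] using count_le_of_le a hT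
    · simpa [count_replicate, hab] using count_le_of_le b hT
    · rw [← card_pos, hTab] at hT0
      simpa using hT0
    · conv_rhs => rw [hTab]
      simp [sum_replicate]
  · rintro ⟨i, hi, j, hj, hij, rfl⟩
    exact nsmul_add_nsmul_mem_subSums a b hi hj hij

variable {a d : G} {k l : ℕ}

theorem nsmul_add_nsmul_add_of_two_nsmul_eq_zero (hd : 2 • d = 0) (i j : ℕ) :
    i • a + j • (a + d) = (i + j) • a + (j % 2) • d := by
  rw [smul_add, ← nsmul_eq_mod_nsmul j hd, add_nsmul, add_assoc]

theorem subSums_replicate_add_replicate_add [DecidableEq G] (hd : 2 • d = 0) (hd0 : d ≠ 0)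
    (hk : 0 < k) (hl : 0 < l) :
    SubSums (replicate k a + replicate l (a + d)) =
      ↑((Finset.range 2).biUnion fun e =>
        (Finset.Icc 1 (k + (l - (l + e) % 2))).image fun m => m • a + e • d) := by
  rw [subSums_replicate_add_replicate_s4 (by simpa using hd0)]
  ext x
  simp only [Set.mem_ofPred_eq, Finset.coe_biUnion, Finset.coe_range, Set.mem_Iio,
    Finset.coe_image, Finset.coe_Icc, Set.mem_iUnion, Set.mem_image, Set.mem_Icc, exists_prop]
  constructor
  · rintro ⟨i, hi, j, hj, hij, rfl⟩
    exact ⟨j % 2, Nat.mod_lt j two_pos, i + j, ⟨hij, by omega⟩,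
      (nsmul_add_nsmul_add_of_two_nsmul_eq_zero hd i j).symm⟩
  · rintro ⟨e, he, s, ⟨hs, hskl⟩, rfl⟩
    obtain ⟨i, hi, j, hj, rfl, rfl⟩ := Nat.exists_add_eq_and_mod_two_eq hk hl he hs hskl
    exact ⟨i, hi, j, hj, hs, nsmul_add_nsmul_add_of_two_nsmul_eq_zero hd i j⟩

theorem ZeroSumFree.nsmul_add_nsmul_ne_zero
    (hS : ZeroSumFree (replicate k a + replicate l (a + d))) (hd : 2 • d = 0)
    (hk : 0 < k) (hl : 0 < l) {s : ℕ} (hs : 0 < s) (hskl : s < k + l) (e : ℕ) :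
    s • a + e • d ≠ 0 := by
  obtain ⟨i, hi, j, hj, rfl, hje⟩ :=
    Nat.exists_add_eq_and_mod_two_eq hk hl (Nat.mod_lt e two_pos) hs (by omega)
  rw [nsmul_eq_mod_nsmul e hd, ← hje, ← nsmul_add_nsmul_add_of_two_nsmul_eq_zero hd]
  exact hS.ne_zero_of_mem_subSums (nsmul_add_nsmul_mem_subSums _ _ hi hj hs)

theorem ZeroSumFree.eq_of_nsmul_add_nsmul_eq
    (hS : ZeroSumFree (replicate k a + replicate l (a + d))) (hd : 2 • d = 0)
    (hd0 : d ≠ 0) (hk : 0 < k) (hl : 0 < l) {m m' e e' : ℕ} (hm : 0 < m) (hm' : 0 < m')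
    (hmkl : m ≤ k + l) (hm'kl : m' ≤ k + l) (he : e < 2) (he' : e' < 2)
    (h : m • a + e • d = m' • a + e' • d) : m = m' ∧ e = e' := by
  wlog hmm' : m ≤ m' generalizing m m' e e'
  · obtain ⟨h₁, h₂⟩ := this hm' hm hm'kl hmkl he' he h.symm (by omega)
    exact ⟨h₁.symm, h₂.symm⟩
  obtain ⟨t, rfl⟩ := Nat.exists_eq_add_of_le hmm'
  rcases Nat.eq_zero_or_pos t with rfl | ht
  · rw [add_zero, add_left_cancel_iff] at h
    refine ⟨rfl, ?_⟩
    interval_cases e <;> interval_cases e' <;> simp_all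
  · have hneg : e • d = -(e • d) := by
      rw [eq_neg_iff_add_eq_zero, ← two_nsmul, ← mul_nsmul, mul_comm, mul_nsmul, hd, nsmul_zero]
    refine absurd ?_ (hS.nsmul_add_nsmul_ne_zero hd hk hl ht (by omega) (e + e'))
    linear_combination (norm := module) -h + hneg

theorem ZeroSumFree.ncard_subSums_replicate_add_replicate_add
    (hS : ZeroSumFree (replicate k a + replicate l (a + d))) (hd : 2 • d = 0) (hd0 : d ≠ 0)
    (hk : 0 < k) (hl : 0 < l) :
    (SubSums (replicate k a + replicate l (a + d))).ncard = 2 * (k + l) - 1 := by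
  classical
  have hinj : ∀ e < 2,
      Set.InjOn (fun m : ℕ => m • a + e • d) ↑(Finset.Icc 1 (k + (l - (l + e) % 2))) :=
    fun e he m hm m' hm' h => by
      simp only [Finset.coe_Icc, Set.mem_Icc] at hm hm'
      exact (hS.eq_of_nsmul_add_nsmul_eq hd hd0 hk hl hm.1 hm'.1 (by omega) (by omega) he he h).1
  rw [subSums_replicate_add_replicate_add hd hd0 hk hl, Set.ncard_coe_finset, Finset.card_biUnion]
  · rw [Finset.sum_congr rfl fun e he => Finset.card_image_of_injOn (hinj e (Finset.mem_range.1 he))]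
    simp only [Finset.sum_range_succ, Finset.sum_range_zero, Nat.card_Icc]
    omega
  · intro e he e' he' hee'
    rw [Function.onFun, Finset.disjoint_left]
    rintro _ hx hx'
    obtain ⟨m, hm, rfl⟩ := Finset.mem_image.1 hx
    obtain ⟨m', hm', h⟩ := Finset.mem_image.1 hx'
    rw [Finset.mem_Icc] at hm hm'
    exact hee' (hS.eq_of_nsmul_add_nsmul_eq hd hd0 hk hl hm'.1 hm.1 (by omega) (by omega)
      (Finset.mem_range.1 he') (Finset.mem_range.1 he) h).2.symm

end

theorem stmt4_general {G : Type*} [AddCommGroup G] (k l : ℕ)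
    (hl : 2 ≤ l) (hkl : l ≤ k) (a b : G) (hab : a ≠ b)
    (hS : ZeroSumFree (replicate k a + replicate l b))
    (h2 : 2 • a = 2 • b) :
    fseq (replicate k a + replicate l b) = 2 * (k + l) - 1 := by
  obtain ⟨d, rfl⟩ : ∃ d, b = a + d := ⟨b - a, by abel⟩
  have hd : 2 • d = 0 := by rwa [smul_add, left_eq_add] at h2
  have hd0 : d ≠ 0 := by simpa using hab
  exact hS.ncard_subSums_replicate_add_replicate_add hd hd0 (by omega) (by omega)

/-- Lemma 2.5(ii): `k ≥ l ≥ 2`, `a ≠ b`, `aᵏbˡ` zero-sum free and not smooth,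
`2a = 2b` imply `f(aᵏbˡ) = 2(k + l) - 1`. -/
theorem stmt4 {G : Type*} [AddCommGroup G] [Fintype G] (k l : ℕ)
    (hl : 2 ≤ l) (hkl : l ≤ k) (a b : G) (hab : a ≠ b)
    (hS : ZeroSumFree (replicate k a + replicate l b))
    (hns : ¬ IsSmooth (replicate k a + replicate l b))
    (h2 : 2 • a = 2 • b) :
    fseq (replicate k a + replicate l b) = 2 * (k + l) - 1 :=
  stmt4_general k l hl hkl a b hab hS h2
end

section
/- Let k ≥ l ≥ 2 be integers and let a, b be two distinct elements of a finite abelian group G such that a^k b^l is zero-sum free. Then it cannot simultaneously hold that a^k b^l is smooth and 2a = 2b; that is, if 2a = 2b then a^k b^l is not smooth. -/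
open Multiset

/-!
If `S` is `g`-smooth, write `S = (n₁g)⋯(n_lg)` with `n₁ + ⋯ + n_l < ord(g)`. An element `c` occurring
twice in `S` is `c = mg = m'g` for two different indices, so `2c = (m + m')g` with
`m + m' < ord(g)`; if moreover `2c = 2g`, this forces `m + m' = 2`, i.e. `c = g`.
For `aᵏbˡ` with `k, l ≥ 2` and `2a = 2b`, both `a` and `b` occur twice and `g` is one of them,
so `a = g = b`.
-/

theorem List.one_le_of_pairwise_le_of_head?_eq_one {ns : List ℕ} (hsort : ns.Pairwise (· ≤ ·))
    (hhead : ns.head? = some 1) : ∀ n ∈ ns, 1 ≤ n := by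
  cases ns with
  | nil => simp at hhead
  | cons m t =>
    obtain rfl : m = 1 := by simpa using hhead
    simpa using (List.pairwise_cons.1 hsort).1

theorem eq_of_two_le_count_map_nsmul {G : Type*} [AddMonoid G] [DecidableEq G] {g c : G}
    {ns : List ℕ} (hpos : ∀ n ∈ ns, 1 ≤ n) (hlt : ns.sum < addOrderOf g)
    (h2 : 2 • c = 2 • g) (hc : 2 ≤ (ns.map (· • g)).count c) : c = g := by
  obtain ⟨l', hsub, hl'⟩ := List.sublist_map_iff.1 (List.replicate_sublist_iff.2 hc)
  rcases l' with _ | ⟨m₁, _ | ⟨m₂, _ | _⟩⟩ <;> simp only [List.replicate, List.map_cons,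
    List.map_nil, List.cons.injEq, reduceCtorEq, and_false, and_true] at hl'
  obtain ⟨hc₁, hc₂⟩ := hl'
  have hsum : m₁ + m₂ ≤ ns.sum := by
    simpa using hsub.sum_le_sum fun _ _ ↦ Nat.zero_le _
  have h₁ := hpos m₁ (hsub.subset (by simp))
  have h₂ := hpos m₂ (hsub.subset (by simp))
  have hm : m₁ + m₂ = 2 :=
    nsmul_injOn_Iio_addOrderOf (x := g) (Set.mem_Iio.2 (by omega)) (Set.mem_Iio.2 (by omega))
      (by simp only [add_nsmul, ← hc₁, ← hc₂, ← two_nsmul, h2])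
  rw [hc₁, show m₁ = 1 by omega, one_nsmul]

section Smooth

variable {G : Type*} [AddCommGroup G] {g : G} {S : Multiset G}

theorem IsSmoothAt.mem (h : IsSmoothAt g S) : g ∈ S := by
  obtain ⟨ns, -, hhead, rfl, -⟩ := h
  exact Multiset.mem_coe.2 (List.mem_map.2 ⟨1, List.mem_of_head? hhead, one_nsmul g⟩)

theorem IsSmoothAt.eq_of_two_nsmul_eq [DecidableEq G] {c : G} (h : IsSmoothAt g S)
    (h2 : 2 • c = 2 • g) (hc : 2 ≤ S.count c) : c = g := by
  obtain ⟨ns, hsort, hhead, rfl, hlt, -⟩ := h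
  rw [Multiset.coe_count] at hc
  exact eq_of_two_le_count_map_nsmul
    (List.one_le_of_pairwise_le_of_head?_eq_one hsort hhead) hlt h2 hc

end Smooth

theorem stmt5_general {G : Type*} [AddCommGroup G] (k l : ℕ)
    (hl : 2 ≤ l) (hkl : l ≤ k) (a b : G) (hab : a ≠ b)
    (h2 : 2 • a = 2 • b) :
    ¬ IsSmooth (replicate k a + replicate l b) := by
  classical
  rintro ⟨g, hg⟩
  have hca : 2 ≤ count a (replicate k a + replicate l b) := by
    rw [count_add, count_replicate_self, count_replicate, if_neg hab.symm]; omega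
  have hcb : 2 ≤ count b (replicate k a + replicate l b) := by
    rw [count_add, count_replicate_self, count_replicate, if_neg hab]; omega
  rcases mem_add.1 hg.mem with hga | hgb
  · rw [eq_of_mem_replicate hga] at hg
    exact hab (hg.eq_of_two_nsmul_eq h2.symm hcb).symm
  · rw [eq_of_mem_replicate hgb] at hg
    exact hab (hg.eq_of_two_nsmul_eq h2 hca)

/-- Remark after Lemma 2.5: for `k ≥ l ≥ 2`, `a ≠ b` and `aᵏbˡ` zero-sum free,
the conditions that `aᵏbˡ` is smooth and `2a = 2b` cannot hold simultaneously. -/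
theorem stmt5 {G : Type*} [AddCommGroup G] [Fintype G] (k l : ℕ)
    (hl : 2 ≤ l) (hkl : l ≤ k) (a b : G) (hab : a ≠ b)
    (hS : ZeroSumFree (replicate k a + replicate l b))
    (h2 : 2 • a = 2 • b) :
    ¬ IsSmooth (replicate k a + replicate l b) :=
  stmt5_general k l hl hkl a b hab h2
end

section
/- Let G be a finite abelian group, S₁ a sequence over G, and a, g ∈ G such that S = S₁a is zero-sum free, S₁ is g-smooth, and S is not g-smooth. Then f(S) = 2·f(S₁) + 1. -/
open Multiset

/-!
Adjoining `a` gives `Σ(S₁a) = Σ(S₁) ∪ (a + ({0} ∪ Σ(S₁)))`, and the second part has `f(S₁) + 1`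
elements because `0 ∉ Σ(S₁)`; so everything comes down to this union being disjoint. Write
`Σ(S₁) = {g, …, ng}`. An overlap `a + jg = ig` with `0 ≤ j ≤ n`, `1 ≤ i ≤ n` gives either
`a + (j - i)g = 0`, which is a zero sum of `S₁a`, or `a = kg` with `1 ≤ k ≤ n`. In the latter case
zero-sum freeness forces `n + k < ord(g)` and `Σ(S₁a) = {g, …, (n + k)g}`, so `S₁a` would be
`g`-smooth, with `k` inserted into the list of multiplicities.
-/

section SubSums

variable {G : Type*} [AddCommGroup G]

theorem subSums_mono {S T : Multiset G} (h : S ≤ T) : SubSums S ⊆ SubSums T :=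
  fun _ ⟨U, hU, hU0, hsum⟩ => ⟨U, hU.trans h, hU0, hsum⟩

theorem finite_subSums (S : Multiset G) : (SubSums S).Finite := by
  classical
  refine (S.powerset.map Multiset.sum).toFinset.finite_toSet.subset ?_
  rintro _ ⟨T, hT, -, rfl⟩
  simpa using ⟨T, hT, rfl⟩

theorem subSums_add_singleton (S : Multiset G) (a : G) :
    SubSums (S + {a}) = SubSums S ∪ (a + ·) '' insert 0 (SubSums S) := by
  have hle : ∀ T, T ≤ S + {a} ↔ T ≤ S ∨ ∃ U ≤ S, a ::ₘ U = T := fun T => by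
    rw [← mem_powerset, add_comm, singleton_add, powerset_cons]
    simp
  ext x
  simp only [SubSums, hle, Set.mem_union, Set.mem_image, Set.mem_insert_iff, Set.mem_ofPred_eq]
  constructor
  · rintro ⟨T, hT | ⟨U, hU, rfl⟩, hT0, rfl⟩
    · exact Or.inl ⟨T, hT, hT0, rfl⟩
    · rcases eq_or_ne U 0 with rfl | hU0
      · exact Or.inr ⟨0, Or.inl rfl, by simp⟩
      · exact Or.inr ⟨U.sum, Or.inr ⟨U, hU, hU0, rfl⟩, (sum_cons a U).symm⟩
  · rintro (⟨T, hT, hT0, rfl⟩ | ⟨_, rfl | ⟨U, hU, hU0, rfl⟩, rfl⟩)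
    · exact ⟨T, Or.inl hT, hT0, rfl⟩
    · exact ⟨{a}, Or.inr ⟨0, zero_le _, rfl⟩, singleton_ne_zero a, by simp⟩
    · exact ⟨a ::ₘ U, Or.inr ⟨U, hU, rfl⟩, cons_ne_zero, sum_cons a U⟩

theorem ZeroSumFree.zero_notMem_subSums {S : Multiset G} (hS : ZeroSumFree S) :
    (0 : G) ∉ SubSums S :=
  fun ⟨T, hT, hT0, hsum⟩ => hS T hT hT0 hsum

theorem ZeroSumFree.add_ne_zero {S : Multiset G} {a y : G} (hS : ZeroSumFree (S + {a}))
    (hy : y ∈ insert 0 (SubSums S)) : a + y ≠ 0 := fun h =>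
  hS.zero_notMem_subSums <| h ▸ subSums_add_singleton S a ▸ Or.inr ⟨y, hy, rfl⟩

theorem fseq_add_singleton_of_disjoint {S : Multiset G} {a : G} (h0 : (0 : G) ∉ SubSums S)
    (hdisj : Disjoint (SubSums S) ((a + ·) '' insert 0 (SubSums S))) :
    fseq (S + {a}) = 2 * fseq S + 1 := by
  rw [fseq, subSums_add_singleton,
    Set.ncard_union_eq hdisj (finite_subSums S) ((finite_subSums S).insert 0 |>.image _),
    Set.ncard_image_of_injective _ (add_right_injective a),
    Set.ncard_insert_of_notMem h0 (finite_subSums S), fseq]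
  ring

end SubSums

section Smooth

variable {G : Type*} [AddCommGroup G]

theorem setOf_nsmul_eq_image_Icc (g : G) (n : ℕ) :
    {x | ∃ m : ℕ, 1 ≤ m ∧ m ≤ n ∧ x = m • g} = (· • g) '' Set.Icc 1 n := by
  ext x
  simp [eq_comm, and_assoc]

theorem insert_zero_image_nsmul_Icc (g : G) (n : ℕ) :
    insert 0 ((· • g) '' Set.Icc 1 n) = (· • g) '' Set.Icc 0 n := by
  rw [← Set.insert_Icc_add_one_left_eq_Icc (Nat.zero_le n), zero_add, Set.image_insert_eq,
    zero_smul]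

theorem subSums_add_singleton_nsmul {S : Multiset G} {g : G} {n k : ℕ}
    (hsums : SubSums S = (· • g) '' Set.Icc 1 n) (hk : k ∈ Set.Icc 1 (n + 1)) :
    SubSums (S + {k • g}) = (· • g) '' Set.Icc 1 (n + k) := by
  have hshift :
      (k • g + ·) '' ((· • g) '' Set.Icc 0 n) = (· • g) '' Set.Icc (k + 0) (k + n) := by
    simp_rw [Set.image_image, ← add_nsmul, ← Set.image_const_add_Icc, Set.image_image]
  rw [subSums_add_singleton, hsums, insert_zero_image_nsmul_Icc, hshift, ← Set.image_union]
  congr 1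
  ext m
  simp only [Set.mem_union, Set.mem_Icc] at hk ⊢
  omega

theorem isSmoothAt_add_singleton_nsmul {S : Multiset G} {g : G} {ns : List ℕ} {k : ℕ}
    (hsort : ns.Pairwise (· ≤ ·)) (hhead : ns.head? = some 1)
    (hS : S = ↑(ns.map (· • g))) (hsums : SubSums S = (· • g) '' Set.Icc 1 ns.sum)
    (hk : k ∈ Set.Icc 1 (ns.sum + 1)) (hlt : ns.sum + k < addOrderOf g) :
    IsSmoothAt g (S + {k • g}) := by
  have hperm : (ns.orderedInsert (· ≤ ·) k).Perm (k :: ns) := List.perm_orderedInsert _ _ _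
  have hsum : (ns.orderedInsert (· ≤ ·) k).sum = ns.sum + k := by
    rw [hperm.sum_eq, List.sum_cons, add_comm]
  refine ⟨ns.orderedInsert (· ≤ ·) k, hsort.orderedInsert k ns, ?_, ?_, hsum ▸ hlt, ?_⟩
  · obtain ⟨t, rfl⟩ := List.head?_eq_some_iff.1 hhead
    rcases hk.1.eq_or_lt with rfl | h1k
    · simp
    · simp [h1k.not_ge]
  · rw [hS, coe_eq_coe.2 (hperm.map _)]
    simp [add_comm]
  · rw [hsum, setOf_nsmul_eq_image_Icc, subSums_add_singleton_nsmul hsums hk]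

theorem disjoint_image_nsmul_Icc {a g : G} {n : ℕ} (hzero : ∀ j ≤ n, a + j • g ≠ 0)
    (hne : ∀ k ∈ Set.Icc 1 n, a ≠ k • g) :
    Disjoint ((· • g) '' Set.Icc 1 n) ((a + ·) '' ((· • g) '' Set.Icc 0 n)) := by
  rw [Set.disjoint_left]
  rintro _ ⟨i, ⟨-, hin⟩, rfl⟩ ⟨_, ⟨j, ⟨-, hjn⟩, rfl⟩, hij⟩
  beta_reduce at hij
  rcases le_or_gt i j with hle | hgt
  · obtain ⟨d, rfl⟩ := Nat.exists_eq_add_of_le hle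
    refine hzero d (by omega) (add_right_cancel (b := i • g) ?_)
    rw [zero_add, add_assoc, ← add_nsmul, add_comm d, hij]
  · obtain ⟨d, rfl⟩ := Nat.exists_eq_add_of_lt hgt
    refine hne (d + 1) ⟨by omega, by omega⟩ (add_right_cancel (b := j • g) ?_)
    rw [hij, ← add_nsmul, add_comm (d + 1), add_assoc]

end Smooth

theorem stmt6_general {G : Type*} [AddCommGroup G] (S₁ : Multiset G)
    (a g : G) (hS : ZeroSumFree (S₁ + {a}))
    (h1 : IsSmoothAt g S₁) (h2 : ¬ IsSmoothAt g (S₁ + {a})) :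
    fseq (S₁ + {a}) = 2 * fseq S₁ + 1 := by
  obtain ⟨ns, hsort, hhead, hS₁, hlt, hsums⟩ := h1
  rw [setOf_nsmul_eq_image_Icc] at hsums
  set n := ns.sum
  have hzero : ∀ j ≤ n, a + j • g ≠ 0 := fun j hj => hS.add_ne_zero <| by
    rw [hsums, insert_zero_image_nsmul_Icc]
    exact ⟨j, ⟨Nat.zero_le j, hj⟩, rfl⟩
  have hnotin : ∀ k ∈ Set.Icc 1 n, a ≠ k • g := by
    rintro k ⟨hk1, hkn⟩ rfl
    refine h2 (isSmoothAt_add_singleton_nsmul hsort hhead hS₁ hsums ⟨hk1, by omega⟩ ?_)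
    by_contra! hge
    refine hzero (addOrderOf g - k) (by omega) ?_
    rw [← add_nsmul, Nat.add_sub_cancel' (by omega), addOrderOf_nsmul_eq_zero]
  refine fseq_add_singleton_of_disjoint
    (fun h0 => hS.zero_notMem_subSums (subSums_mono le_self_add h0)) ?_
  rw [hsums, insert_zero_image_nsmul_Icc]
  exact disjoint_image_nsmul_Icc hzero hnotin

/-- Lemma 2.7: if `S = S₁a` is zero-sum free, `S₁` is `g`-smooth and `S` is not
`g`-smooth, then `f(S) = 2f(S₁) + 1`. -/
theorem stmt6 {G : Type*} [AddCommGroup G] [Fintype G] (S₁ : Multiset G)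
    (a g : G) (hS : ZeroSumFree (S₁ + {a}))
    (h1 : IsSmoothAt g S₁) (h2 : ¬ IsSmoothAt g (S₁ + {a})) :
    fseq (S₁ + {a}) = 2 * fseq S₁ + 1 :=
  stmt6_general S₁ a g hS h1 h2
end

section
/- Let G be a finite abelian group and let S be a zero-sum free sequence over G that contains an element of order 2. Then f(S) ≥ 2|S| − 1. -/
open Multiset

/-!
Remove an element `g` of order 2 from `S`, list the rest as `a₁ ⋯ a_k` and let
`Pᵢ = a₁ + ⋯ + aᵢ` for `0 ≤ i ≤ k`. The `k + 1` prefix sums `Pᵢ` and their `k + 1` translates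
`g + Pᵢ` are pairwise distinct: a coincidence would make a nonempty block `a_{j+1} ⋯ a_i`
sum to `0` or to `g = -g`, and in either case `S` would contain a zero-sum subsequence.
All of them except `P₀ = 0` are subsums of `S`, so `f(S) ≥ 2k + 1 = 2|S| - 1`.
-/

section

variable {G : Type*} [AddCommGroup G]

theorem sum_mem_insert_zero_subSums {S D : Multiset G} (hD : D ≤ S) :
    D.sum ∈ insert 0 (SubSums S) := by
  rcases eq_or_ne D 0 with rfl | hD0
  · exact Set.mem_insert _ _
  · exact Set.mem_insert_of_mem _ ⟨D, hD, hD0, rfl⟩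

theorem List.sum_take_sub_sum_take (L : List G) {i j : ℕ} (hij : i ≤ j) :
    (L.take j).sum - (L.take i).sum = ((L.drop i).take (j - i)).sum := by
  obtain ⟨m, rfl⟩ := Nat.exists_eq_add_of_le hij
  rw [List.take_add, List.sum_append, add_sub_cancel_left, Nat.add_sub_cancel_left]

namespace ZeroSumFree

theorem mono {S T : Multiset G} (hS : ZeroSumFree S) (hT : T ≤ S) : ZeroSumFree T :=
  fun U hU => hS U (hU.trans hT)

theorem zero_notMem_subSums_s16 {S : Multiset G} (hS : ZeroSumFree S) : (0 : G) ∉ SubSums S :=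
  fun ⟨T, hT, hT0, hsum⟩ => hS T hT hT0 hsum

theorem ncard_insert_zero_subSums {S : Multiset G} (hS : ZeroSumFree S) :
    (insert 0 (SubSums S)).ncard = fseq S + 1 :=
  Set.ncard_insert_of_notMem hS.zero_notMem_subSums_s16 (finite_subSums S)

theorem sum_ne_neg_of_le {g : G} {T D : Multiset G} (hS : ZeroSumFree (g ::ₘ T)) (hD : D ≤ T) :
    D.sum ≠ -g := fun h =>
  hS (g ::ₘ D) (cons_le_cons g hD) cons_ne_zero (by rw [sum_cons, h, add_neg_cancel])

theorem sum_take_sub_sum_take_notMem {g : G} {L : List G} (hS : ZeroSumFree (g ::ₘ ↑L))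
    (hg : -g = g) {i j : ℕ} (hi : i ≤ L.length) (hj : j ≤ L.length) (hij : i ≠ j) :
    (L.take i).sum - (L.take j).sum ∉ ({0, g} : Set G) := by
  wlog hji : j < i generalizing i j
  · have h := this hj hi hij.symm (lt_of_le_of_ne (not_lt.1 hji) hij)
    rw [← neg_sub]
    simpa only [Set.mem_insert_iff, Set.mem_singleton_iff, neg_eq_iff_eq_neg, neg_zero, hg]
      using h
  rw [L.sum_take_sub_sum_take hji.le, ← sum_coe]
  set D : Multiset G := ↑((L.drop j).take (i - j))
  have hDL : D ≤ ↑L :=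
    coe_le.2 ((List.take_sublist _ _).trans (List.drop_sublist _ _)).subperm
  have hD0 : D ≠ 0 := by
    rw [Ne, ← card_eq_zero, coe_card, List.length_take, List.length_drop]
    omega
  rintro (h | h)
  · exact hS.mono (hDL.trans (le_cons_self _ _)) D le_rfl hD0 h
  · exact hS.sum_ne_neg_of_le hDL (h.trans hg.symm)

theorem two_mul_card_add_two_le {g : G} {T : Multiset G} (hS : ZeroSumFree (g ::ₘ T))
    (hg : -g = g) : 2 * card T + 2 ≤ (insert 0 (SubSums (g ::ₘ T))).ncard := by
  classical
  obtain ⟨L, rfl⟩ : ∃ L : List G, ↑L = T := ⟨T.toList, coe_toList T⟩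
  have hg0 : g ≠ 0 := fun h => hS {g} (singleton_le.2 (mem_cons_self _ _)) (singleton_ne_zero g)
    (by rw [sum_singleton, h])
  set C := (Finset.range (L.length + 1)).image fun i => (L.take i).sum
  have hC : C.card = L.length + 1 := by
    refine (Finset.card_image_of_injOn fun i hi j hj hij => ?_).trans (Finset.card_range _)
    by_contra hne
    exact hS.sum_take_sub_sum_take_notMem hg (Nat.lt_succ_iff.1 (Finset.mem_range.1 hi))
      (Nat.lt_succ_iff.1 (Finset.mem_range.1 hj)) hne (Or.inl (sub_eq_zero.2 hij))
  have hdisj : Disjoint C (C.image (g + ·)) := by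
    simp only [Finset.disjoint_left, Finset.mem_image, C, Finset.mem_range, Nat.lt_succ_iff]
    rintro _ ⟨i, hi, rfl⟩ ⟨_, ⟨j, hj, rfl⟩, hij⟩
    rcases eq_or_ne i j with rfl | hne
    · exact hg0 (by simpa using hij)
    · refine hS.sum_take_sub_sum_take_notMem hg hi hj hne ?_
      rw [← hij, add_sub_cancel_right]
      exact .inr rfl
  have hsub : ↑(C ∪ C.image (g + ·)) ⊆ insert 0 (SubSums (g ::ₘ ↑L)) := by
    have hle (i : ℕ) : (↑(L.take i) : Multiset G) ≤ ↑L := coe_le.2 (L.take_sublist i).subperm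
    simp only [Finset.coe_union, Finset.coe_image, C, Set.union_subset_iff, Set.image_subset_iff]
    refine ⟨fun i _ => ?_, fun i _ => ?_⟩
    · rw [Set.mem_preimage, ← sum_coe]
      exact sum_mem_insert_zero_subSums ((hle i).trans (le_cons_self _ _))
    · rw [Set.mem_preimage, Set.mem_preimage, ← sum_coe, ← sum_cons]
      exact sum_mem_insert_zero_subSums (cons_le_cons g (hle i))
  calc 2 * card (L : Multiset G) + 2 = (C ∪ C.image (g + ·)).card := by
        rw [Finset.card_union_of_disjoint hdisj,
          Finset.card_image_of_injective _ (add_right_injective g), hC, coe_card]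
        ring
    _ ≤ _ := by
        rw [← Set.ncard_coe_finset]
        exact Set.ncard_le_ncard hsub ((finite_subSums _).insert 0)

end ZeroSumFree

end

theorem stmt16_general {G : Type*} [AddCommGroup G] (S : Multiset G)
    (hS : ZeroSumFree S) (hg : ∃ g ∈ S, addOrderOf g = 2) :
    2 * (S.card : ℤ) - 1 ≤ (fseq S : ℤ) := by
  obtain ⟨g, hgS, hord⟩ := hg
  obtain ⟨T, rfl⟩ := exists_cons_of_mem hgS
  have hneg : -g = g := by
    rw [neg_eq_iff_add_eq_zero, ← two_nsmul, ← hord, addOrderOf_nsmul_eq_zero]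
  have h := hS.two_mul_card_add_two_le hneg
  rw [hS.ncard_insert_zero_subSums] at h
  rw [card_cons]
  omega

/-- Lemma 2.4: if a zero-sum free sequence `S` contains an element of order `2`,
then `f(S) ≥ 2|S| - 1`. -/
theorem stmt16 {G : Type*} [AddCommGroup G] [Fintype G] (S : Multiset G)
    (hS : ZeroSumFree S) (hg : ∃ g ∈ S, addOrderOf g = 2) :
    2 * (S.card : ℤ) - 1 ≤ (fseq S : ℤ) :=
  stmt16_general S hS hg
end
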